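/- Let E be an infinite-dimensional Banach space and let Σ be a countable set. Let τ be a mapping defined on the family 𝒢(E) of all infinite-dimensional closed subspaces of E with values in the powerset of Σ, which is decreasing with respect to the quasi-order ≤ and inclusion, i.e. for all N, M ∈ 𝒢(E), if N ≤ M then τ(N) ⊇ τ(M). Then there exists a subspace M ∈ 𝒢(E) which is stabilizing for τ, i.e. τ(L) = τ(M) for every infinite-dimensional closed subspace L of M. -/

import Mathlib

open Filter Topology

/-- Two sequences of vectors are `c`-equivalent: the natural map between their spans
distorts norms of finite linear combinations by at most a factor `c`. -/
def SeqEquiv {E F : Type*} [NormedAddCommGroup E] [NormedSpace ℝ E]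
    [NormedAddCommGroup F] [NormedSpace ℝ F]
    (c : ℝ) (x : ℕ → E) (y : ℕ → F) : Prop :=
  ∀ (s : Finset ℕ) (a : ℕ → ℝ),
    (1 / c) * ‖∑ i ∈ s, a i • x i‖ ≤ ‖∑ i ∈ s, a i • y i‖ ∧
    ‖∑ i ∈ s, a i • y i‖ ≤ c * ‖∑ i ∈ s, a i • x i‖

/-- A basic sequence: nonzero vectors whose partial-sum projections are uniformly bounded,
i.e. a Schauder basis of its closed linear span. -/
def IsBasicSeq {E : Type*} [NormedAddCommGroup E] [NormedSpace ℝ E] (x : ℕ → E) : Prop :=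
  (∀ n, x n ≠ 0) ∧
  ∃ K : ℝ, 1 ≤ K ∧ ∀ (a : ℕ → ℝ) (m n : ℕ), m ≤ n →
    ‖∑ i ∈ Finset.range m, a i • x i‖ ≤ K * ‖∑ i ∈ Finset.range n, a i • x i‖

/-- An unconditional basic sequence. -/
def IsUnconditionalSeq {E : Type*} [NormedAddCommGroup E] [NormedSpace ℝ E]
    (x : ℕ → E) : Prop :=
  IsBasicSeq x ∧
  ∃ K : ℝ, 0 < K ∧ ∀ (s : Finset ℕ) (a ε : ℕ → ℝ), (∀ i, ε i = 1 ∨ ε i = -1) →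
    ‖∑ i ∈ s, (ε i * a i) • x i‖ ≤ K * ‖∑ i ∈ s, a i • x i‖

/-- A `C`-subsymmetric sequence: an unconditional basic sequence that is `C`-equivalent
to each of its subsequences. -/
def IsSubsymmetric {E : Type*} [NormedAddCommGroup E] [NormedSpace ℝ E]
    (C : ℝ) (x : ℕ → E) : Prop :=
  IsUnconditionalSeq x ∧ ∀ φ : ℕ → ℕ, StrictMono φ → SeqEquiv C x (x ∘ φ)

/-- A Schauder basis of `E`: biorthogonal system whose partial sums of the expansion of
every vector converge to that vector. -/
structure RealSchauderBasis (E : Type*) [NormedAddCommGroup E] [NormedSpace ℝ E] where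
  e : ℕ → E
  coord : ℕ → E →L[ℝ] ℝ
  biorth : ∀ i j, coord i (e j) = if i = j then (1 : ℝ) else 0
  expand : ∀ x : E,
    Filter.Tendsto (fun n => ∑ i ∈ Finset.range n, coord i x • e i) atTop (𝓝 x)

/-- A block sequence with respect to a Schauder basis: nonzero, finitely supported
vectors with successive supports. -/
def IsBlockSeq {E : Type*} [NormedAddCommGroup E] [NormedSpace ℝ E]
    (b : RealSchauderBasis E) (x : ℕ → E) : Prop :=
  (∀ n, x n ≠ 0) ∧
  (∀ n, (Function.support fun i => b.coord i (x n)).Finite) ∧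
  ∀ m n, m < n → ∀ i ∈ Function.support (fun i => b.coord i (x m)),
    ∀ j ∈ Function.support (fun j => b.coord j (x n)), i < j

/-- A block subspace: the closed linear span of a block sequence. -/
def IsBlockSubspace {E : Type*} [NormedAddCommGroup E] [NormedSpace ℝ E]
    (b : RealSchauderBasis E) (M : Submodule ℝ E) : Prop :=
  ∃ x : ℕ → E, IsBlockSeq b x ∧ M = (Submodule.span ℝ (Set.range x)).topologicalClosure

/-- An infinite-dimensional closed subspace. -/
def InfDimClosed {E : Type*} [NormedAddCommGroup E] [NormedSpace ℝ E]
    (M : Submodule ℝ E) : Prop :=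
  IsClosed (M : Set E) ∧ ¬ FiniteDimensional ℝ M

/-- The quasi-order on subspaces: `L ≤ M` iff `L ⊆ M + F` for some finite-dimensional `F`. -/
def SubspaceLE {E : Type*} [NormedAddCommGroup E] [NormedSpace ℝ E]
    (L M : Submodule ℝ E) : Prop :=
  ∃ F : Submodule ℝ E, FiniteDimensional ℝ F ∧ L ≤ M ⊔ F

/-- The equivalence relation `≐` induced by the quasi-order `SubspaceLE`. -/
def SubspaceEquiv {E : Type*} [NormedAddCommGroup E] [NormedSpace ℝ E]
    (L M : Submodule ℝ E) : Prop :=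
  SubspaceLE L M ∧ SubspaceLE M L

/-- Two normed spaces are `c`-isomorphic: a linear isomorphism with
`(1/c)‖v‖ ≤ ‖Tv‖ ≤ c‖v‖`. -/
def IsoWithConst (c : ℝ) (X Y : Type*) [NormedAddCommGroup X] [NormedSpace ℝ X]
    [NormedAddCommGroup Y] [NormedSpace ℝ Y] : Prop :=
  ∃ T : X ≃ₗ[ℝ] Y, ∀ v : X, (1 / c) * ‖v‖ ≤ ‖T v‖ ∧ ‖T v‖ ≤ c * ‖v‖

/-- A `c`-minimal Banach space: every infinite-dimensional closed subspace contains a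
further infinite-dimensional closed subspace `c`-isomorphic to the whole space. -/
def CMinimalSpace (c : ℝ) (X : Type*) [NormedAddCommGroup X] [NormedSpace ℝ X] : Prop :=
  ∀ L : Submodule ℝ X, InfDimClosed L →
    ∃ N : Submodule ℝ X, N ≤ L ∧ InfDimClosed N ∧ IsoWithConst c ↥N X

/-- A minimal Banach space: every infinite-dimensional closed subspace contains a
further infinite-dimensional closed subspace isomorphic to the whole space. -/
def MinimalSpace (X : Type*) [NormedAddCommGroup X] [NormedSpace ℝ X] : Prop :=
  ∀ L : Submodule ℝ X, InfDimClosed L →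
    ∃ N : Submodule ℝ X, N ≤ L ∧ InfDimClosed N ∧ Nonempty (↥N ≃L[ℝ] X)

/-!
Enumerate `σ` as `e 0, e 1, …` and choose a decreasing chain `M n` in `𝒢(E)` such that
`e n ∈ τ (M (n + 1))` as soon as `e n ∈ τ N` for some `N ∈ 𝒢(E)` contained in `M n`.
A diagonal `D ∈ 𝒢(E)` with `D ≤ M n` for every `n` is stabilizing: if `L ⊆ D` and
`e n ∈ τ L`, then some `N ⊆ M n` in `𝒢(E)` satisfies `N ≤ L`, so `e n ∈ τ N`, hence
`e n ∈ τ (M (n + 1)) ⊆ τ D`; the reverse inclusion is monotonicity of `τ`.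
-/

theorem exists_seq_of_forall_exists {α : Type*} {p : α → Prop} (R : ℕ → α → α → Prop)
    (h₀ : ∃ a, p a) (h : ∀ n a, p a → ∃ b, p b ∧ R n a b) :
    ∃ f : ℕ → α, ∀ n, p (f n) ∧ R n (f n) (f (n + 1)) := by
  obtain ⟨a, ha⟩ := h₀
  choose! next hnext using h
  let f : ℕ → α := fun n => Nat.rec a next n
  have hf : ∀ n, p (f n) := fun n => Nat.rec ha (fun n ih => (hnext n _ ih).1) n
  exact ⟨f, fun n => ⟨hf n, (hnext n _ (hf n)).2⟩⟩

namespace Submodule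

variable {K V : Type*} [DivisionRing K] [AddCommGroup V] [Module K V]

theorem exists_finiteDimensional_lt_le_sup {S N : Submodule K V} [FiniteDimensional K S]
    (hN : ¬ FiniteDimensional K N) :
    ∃ S' : Submodule K V, FiniteDimensional K S' ∧ S < S' ∧ S' ≤ S ⊔ N := by
  obtain ⟨v, hvN, hvS⟩ : ∃ v ∈ N, v ∉ S := by
    by_contra! hNS
    exact hN (finiteDimensional_of_le hNS)
  exact ⟨S ⊔ K ∙ v, inferInstance, lt_sup_iff_notMem.2 hvS,
    sup_le_sup_left ((span_singleton_le_iff_mem v N).2 hvN) S⟩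

theorem not_finiteDimensional_of_strictMono {S : ℕ → Submodule K V} {D : Submodule K V}
    (hS : StrictMono S) (hSD : ∀ n, S n ≤ D) : ¬ FiniteDimensional K D := by
  intro hD
  have hrank : StrictMono fun n => Module.finrank K (S n) := fun m n hmn =>
    haveI := finiteDimensional_of_le (hSD n)
    finrank_lt_finrank_of_lt (hS hmn)
  have := finrank_mono (hSD (Module.finrank K D + 1))
  have := hrank.le_apply (x := Module.finrank K D + 1)
  omega

end Submodule

section

open Submodule

variable {E : Type*} [NormedAddCommGroup E] [NormedSpace ℝ E]

theorem infDimClosed_top (hE : ¬ FiniteDimensional ℝ E) : InfDimClosed (⊤ : Submodule ℝ E) :=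
  ⟨isClosed_univ, fun _ => hE topEquiv.finiteDimensional⟩

/-- The closure of the union of a chain `S n` of finite-dimensional subspaces with
`S (n + 1) ≤ S n ⊔ M n` is the required diagonal subspace. -/
theorem exists_infDimClosed_forall_subspaceLE_of_antitone {M : ℕ → Submodule ℝ E}
    (hanti : Antitone M) (hM : ∀ n, InfDimClosed (M n)) :
    ∃ D : Submodule ℝ E, InfDimClosed D ∧ ∀ n, SubspaceLE D (M n) := by
  obtain ⟨S, hS⟩ := exists_seq_of_forall_exists
    (p := fun S : Submodule ℝ E => FiniteDimensional ℝ S)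
    (fun n S S' => S < S' ∧ S' ≤ S ⊔ M n) ⟨⊥, inferInstance⟩
    fun n S _ => by simpa only [and_assoc] using exists_finiteDimensional_lt_le_sup (hM n).2
  have hSmono : StrictMono S := strictMono_nat_of_lt_succ fun n => (hS n).2.1
  have hSle : ∀ n k, n ≤ k → S k ≤ S n ⊔ M n := fun n =>
    Nat.le_induction le_sup_left fun k hnk ih =>
      (hS k).2.2.trans (sup_le ih (le_sup_of_le_right (hanti hnk)))
  have hsup : ∀ n, ⨆ k, S k ≤ M n ⊔ S n := fun n => iSup_le fun k =>
    (le_total n k).elim (fun h => (hSle n k h).trans (sup_comm _ _).le)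
      (fun h => le_sup_of_le_right (hSmono.monotone h))
  refine ⟨(⨆ k, S k).topologicalClosure,
    ⟨isClosed_topologicalClosure _, not_finiteDimensional_of_strictMono hSmono fun n =>
      (le_iSup S n).trans (le_topologicalClosure _)⟩,
    fun n => ⟨S n, (hS n).1, topologicalClosure_minimal _ (hsup n) ?_⟩⟩
  have := (hS n).1
  exact isClosed_sup_finiteDimensional _ _ (hM n).1

/-- Intersecting `W` with `L ⊔ F` keeps infinite dimension by the modular law. -/
theorem SubspaceLE.exists_infDimClosed_le_rev {L W : Submodule ℝ E} (h : SubspaceLE L W)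
    (hL : InfDimClosed L) (hW : IsClosed (W : Set E)) :
    ∃ N ≤ W, InfDimClosed N ∧ SubspaceLE N L := by
  obtain ⟨F, hF, hLF⟩ := h
  refine ⟨W ⊓ (L ⊔ F), inf_le_left,
    ⟨hW.inter (isClosed_sup_finiteDimensional L F hL.1), fun hfin => hL.2 ?_⟩,
    F, hF, inf_le_right⟩
  have hLle : L ≤ F ⊔ W ⊓ (L ⊔ F) := calc
    L ≤ (F ⊔ W) ⊓ (L ⊔ F) := le_inf (hLF.trans (sup_comm _ _).le) le_sup_left
    _ = F ⊔ W ⊓ (L ⊔ F) := sup_inf_assoc_of_le W le_sup_right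
  exact finiteDimensional_of_le hLle

end

theorem stabilizing_lemma_decreasing_general
    {E : Type*} [NormedAddCommGroup E] [NormedSpace ℝ E]
    (hE : ¬ FiniteDimensional ℝ E)
    {σ : Type*} [Countable σ]
    (τ : Submodule ℝ E → Set σ)
    (hmono : ∀ N M : Submodule ℝ E, InfDimClosed N → InfDimClosed M →
      SubspaceLE N M → τ M ⊆ τ N) :
    ∃ M : Submodule ℝ E, InfDimClosed M ∧
      ∀ L : Submodule ℝ E, InfDimClosed L → L ≤ M → τ L = τ M := by
  rcases isEmpty_or_nonempty σ with hσ | hσ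
  · exact ⟨⊤, infDimClosed_top hE, fun L _ _ => Subsingleton.elim _ _⟩
  obtain ⟨e, he⟩ := exists_surjective_nat σ
  obtain ⟨M, hM⟩ := exists_seq_of_forall_exists (p := InfDimClosed)
    (fun n W N => N ≤ W ∧ ((∃ N' ≤ W, InfDimClosed N' ∧ e n ∈ τ N') → e n ∈ τ N))
    ⟨⊤, infDimClosed_top hE⟩ fun n W hW => by
      by_cases h : ∃ N' ≤ W, InfDimClosed N' ∧ e n ∈ τ N'
      · obtain ⟨N', hN'W, hN', hn⟩ := h
        exact ⟨N', hN', hN'W, fun _ => hn⟩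
      · exact ⟨W, hW, le_rfl, fun h' => absurd h' h⟩
  obtain ⟨D, hD, hDM⟩ := exists_infDimClosed_forall_subspaceLE_of_antitone
    (antitone_nat_of_succ_le fun n => (hM n).2.1) fun n => (hM n).1
  refine ⟨D, hD, fun L hL hLD => Set.Subset.antisymm ?_
    (hmono L D hL hD ⟨⊥, inferInstance, hLD.trans le_sup_left⟩)⟩
  intro s hs
  obtain ⟨n, rfl⟩ := he s
  obtain ⟨F, hF, hDF⟩ := hDM n
  obtain ⟨N, hNM, hN, hNL⟩ :=
    SubspaceLE.exists_infDimClosed_le_rev ⟨F, hF, hLD.trans hDF⟩ hL (hM n).1.1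
  exact hmono D (M (n + 1)) hD (hM (n + 1)).1 (hDM (n + 1))
    ((hM n).2.2 ⟨N, hNM, hN, hmono N L hN hL hNL hs⟩)

/-- The stabilizing lemma for decreasing maps on the family of all
infinite-dimensional closed subspaces of an infinite-dimensional Banach space. -/
theorem stabilizing_lemma_decreasing
    {E : Type*} [NormedAddCommGroup E] [NormedSpace ℝ E] [CompleteSpace E]
    (hE : ¬ FiniteDimensional ℝ E)
    {σ : Type*} [Countable σ]
    (τ : Submodule ℝ E → Set σ)
    (hmono : ∀ N M : Submodule ℝ E, InfDimClosed N → InfDimClosed M →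
      SubspaceLE N M → τ M ⊆ τ N) :
    ∃ M : Submodule ℝ E, InfDimClosed M ∧
      ∀ L : Submodule ℝ E, InfDimClosed L → L ≤ M → τ L = τ M :=
  stabilizing_lemma_decreasing_general hE τ hmono
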